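/- arXiv:2509.21101 — 6 statements merged into one kernel-verified Lean document; each statement's English description precedes it below -/
import Mathlib

section
/- Let u, v ∈ ℂⁿ with v ≠ 0. There exists a complex symmetric matrix Δ ∈ ℂ^{n×n} (Δᵀ = Δ) with Δv = u. -/
open Matrix

theorem symmetric_mapping {n : ℕ} (u v : Fin n → ℂ) (hv : v ≠ 0) :
    ∃ Δ : Matrix (Fin n) (Fin n) ℂ, Δᵀ = Δ ∧ Δ.mulVec v = u := by
  obtain ⟨k, hk⟩ := Function.ne_iff.mp hv
  have hk : v k ≠ 0 := hk
  set c := v k with hc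
  set s : ℂ := ∑ m, u m * v m with hs
  refine ⟨Matrix.of fun i j =>
    u i * (if j = k then 1 else 0) / c + (if i = k then 1 else 0) * u j / c
      - s / (c * c) * (if i = k then 1 else 0) * (if j = k then 1 else 0), ?_, ?_⟩
  · ext i j
    simp only [transpose_apply, of_apply]
    by_cases hi : i = k <;> by_cases hj : j = k <;> simp [hi, hj] <;> ring
  · funext i
    simp only [mulVec, dotProduct, of_apply]
    have : ∀ j, (u i * (if j = k then 1 else 0) / c + (if i = k then 1 else 0) * u j / c
        - s / (c * c) * (if i = k then 1 else 0) * (if j = k then 1 else 0)) * v j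
        = (if j = k then u i * v j / c else 0)
          + (if i = k then 1 else 0) * (u j * v j) / c
          - (if j = k then s / (c * c) * (if i = k then 1 else 0) * v j else 0) := by
      intro j
      by_cases hj : j = k <;> by_cases hi : i = k <;> simp [hj, hi] <;> ring
    rw [Finset.sum_congr rfl fun j _ => this j]
    simp only [Finset.sum_sub_distrib, Finset.sum_add_distrib, Finset.sum_ite_eq',
      Finset.mem_univ, if_true, ← Finset.sum_div, ← Finset.mul_sum, ← hs]
    rw [← hc]
    by_cases hi : i = k <;> field_simp [hi] <;> ring
end

section
/- Let u, v ∈ ℂⁿ with v ≠ 0. There exists a complex skew-symmetric matrix Δ ∈ ℂ^{n×n} (Δᵀ = -Δ) with Δv = u if and only if vᵀu = 0. -/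
open Matrix

theorem skew_symmetric_mapping {n : ℕ} (u v : Fin n → ℂ) (hv : v ≠ 0) :
    (∃ Δ : Matrix (Fin n) (Fin n) ℂ, Δᵀ = -Δ ∧ Δ.mulVec v = u) ↔ v ⬝ᵥ u = 0 := by
  constructor
  · rintro ⟨Δ, hskew, rfl⟩
    have h1 : v ⬝ᵥ Δ *ᵥ v = (Δᵀ *ᵥ v) ⬝ᵥ v := by
      rw [Matrix.dotProduct_mulVec, Matrix.mulVec_transpose]
    rw [hskew, Matrix.neg_mulVec, neg_dotProduct, dotProduct_comm] at h1
    rw [dotProduct_comm v]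
    linear_combination h1 / 2
  · intro hvu
    obtain ⟨i, hi⟩ : ∃ i, v i ≠ 0 := by
      by_contra h
      push_neg at h
      exact hv (funext fun i => h i)
    set w : Fin n → ℂ := fun k => if k = i then (v i)⁻¹ else 0 with hw
    have hwv : w ⬝ᵥ v = 1 := by
      simp [hw, dotProduct, Finset.sum_ite_eq', inv_mul_cancel₀ hi]
    have key : ∀ (a b : Fin n → ℂ), (vecMulVec a b).mulVec v = (b ⬝ᵥ v) • a := by
      intro a b
      ext j
      simp [Matrix.mulVec, dotProduct, vecMulVec_apply, Finset.mul_sum,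
        Finset.sum_mul, mul_assoc, mul_comm, mul_left_comm]
    refine ⟨vecMulVec u w - vecMulVec w u, ?_, ?_⟩
    · ext j k
      simp [vecMulVec_apply]
      ring
    · rw [Matrix.sub_mulVec, key, key, hwv, dotProduct_comm u v, hvu]
      simp
end

section
/- Let u, v, w ∈ ℂⁿ with v ≠ 0. There exists a matrix Δ ∈ ℂ^{n×n} with Δv = u and Δ*v = w if and only if v*u = w*v. -/
open Matrix

lemma vmv_mulVec {n : ℕ} (a b x : Fin n → ℂ) :
    (vecMulVec a b).mulVec x = (b ⬝ᵥ x) • a := by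
  ext i
  simp [mulVec, dotProduct, vecMulVec_apply, Finset.mul_sum, mul_assoc, mul_comm, mul_left_comm]

lemma vmv_conjT {n : ℕ} (a b : Fin n → ℂ) :
    (vecMulVec a b)ᴴ = vecMulVec (star b) (star a) := by
  ext i j
  simp [vecMulVec_apply, conjTranspose_apply, mul_comm]

theorem star_two_sided_mapping {n : ℕ} (u v w : Fin n → ℂ) (hv : v ≠ 0) :
    (∃ Δ : Matrix (Fin n) (Fin n) ℂ, Δ.mulVec v = u ∧ Δᴴ.mulVec v = w) ↔
      star v ⬝ᵥ u = star w ⬝ᵥ v := by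
  constructor
  · rintro ⟨Δ, h1, h2⟩
    calc star v ⬝ᵥ u = star v ⬝ᵥ (Δ.mulVec v) := by rw [h1]
    _ = star (Δᴴ.mulVec v) ⬝ᵥ v := by
        rw [star_mulVec, dotProduct_mulVec, conjTranspose_conjTranspose]
    _ = star w ⬝ᵥ v := by rw [h2]
  · intro h
    set c : ℂ := star v ⬝ᵥ v with hc
    have hc0 : c ≠ 0 := by
      open ComplexOrder in
      exact fun h0 => hv (dotProduct_star_self_eq_zero.mp h0)
    set d : ℂ := star v ⬝ᵥ u with hd
    have hcstar : star c = c := by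
      simp [hc, dotProduct, map_sum, mul_comm]
    refine ⟨c⁻¹ • (vecMulVec u (star v) + vecMulVec v (star w))
        - (d * c⁻¹ * c⁻¹) • vecMulVec v (star v), ?_, ?_⟩
    · rw [sub_mulVec, smul_mulVec, smul_mulVec, add_mulVec,
        vmv_mulVec, vmv_mulVec, vmv_mulVec, ← hc, ← h]
      rw [smul_add, smul_smul, smul_smul, smul_smul,
        inv_mul_cancel₀ hc0, one_smul]
      have e : d * c⁻¹ * c⁻¹ * c = c⁻¹ * d := by field_simp
      rw [e]
      abel
    · rw [conjTranspose_sub, conjTranspose_smul, conjTranspose_smul,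
        conjTranspose_add, vmv_conjT, vmv_conjT, vmv_conjT]
      simp only [star_star]
      rw [sub_mulVec, smul_mulVec, smul_mulVec, add_mulVec,
        vmv_mulVec, vmv_mulVec, vmv_mulVec, ← hc]
      have hdstar : star d = star u ⬝ᵥ v := by
        simp [hd, dotProduct, map_sum, mul_comm]
      simp only [star_mul', star_inv₀, hcstar, hdstar]
      rw [smul_add, smul_smul, smul_smul, smul_smul]
      have h1 : c⁻¹ * c = 1 := inv_mul_cancel₀ hc0
      have h2 : (star u ⬝ᵥ v) * c⁻¹ * c⁻¹ * c = c⁻¹ * (star u ⬝ᵥ v) := by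
        field_simp
      rw [mul_comm c⁻¹ (star u ⬝ᵥ v), h1, one_smul, h2,
        show star u ⬝ᵥ v * c⁻¹ = c⁻¹ * (star u ⬝ᵥ v) from mul_comm _ _]
      abel
end

section
/- Let λ ∈ ℂ, λ ≠ 0, let d ∈ ℕ, and let x*y ∈ ℂ be nonzero with ξ := arg(x*y). There exists ω ∈ ℂ with |ω| = 1 such that ω·sign(λ^k)·(x*y) ∈ ℝ for all k = 0,…,d (with d ≥ 1) if and only if λ ∈ ℝ, where sign(z) = conj(z)/|z|. -/
/-- `sign(z) = conj(z)/|z|` for `z ≠ 0`, and `sign(0) = 1`. -/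
noncomputable def csign (z : ℂ) : ℂ :=
  if z = 0 then 1 else (starRingEnd ℂ) z / ((‖z‖ : ℝ) : ℂ)

/-!
The `k = 0` condition says that `ω ζ` is a nonzero real number, so the `k = 1` condition
`(ω ζ · sign λ).im = 0` forces `sign λ`, and hence `λ`, to be real. Conversely, for real `λ` every
`sign (λ ^ k)` is real, and it suffices to rotate `ζ` onto the real axis.
-/

open Complex

lemma csign_im (z : ℂ) : (csign z).im = -z.im / ‖z‖ := by
  unfold csign
  split_ifs with hz
  · simp [hz]
  · rw [div_ofReal_im, conj_im]

lemma csign_im_eq_zero_iff {z : ℂ} : (csign z).im = 0 ↔ z.im = 0 := by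
  rcases eq_or_ne z 0 with rfl | hz
  · simp [csign]
  · rw [csign_im, div_eq_zero_iff, neg_eq_zero, or_iff_left (norm_ne_zero_iff.mpr hz)]

lemma im_pow_eq_zero_of_im_eq_zero {z : ℂ} (hz : z.im = 0) (k : ℕ) : (z ^ k).im = 0 := by
  rw [← conj_eq_iff_im, map_pow, conj_eq_iff_im.mpr hz]

lemma im_mul_eq_zero_of_im_eq_zero {a b : ℂ} (ha : a.im = 0) (hb : b.im = 0) :
    (a * b).im = 0 := by
  simp [mul_im, ha, hb]

lemma im_eq_zero_of_im_mul_eq_zero {a b : ℂ} (ha : a.im = 0) (ha₀ : a ≠ 0)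
    (hab : (a * b).im = 0) : b.im = 0 := by
  have hre : a.re ≠ 0 := fun h => ha₀ (ext h ha)
  simpa [mul_im, ha, hre] using hab

lemma exists_norm_eq_one_im_mul_eq_zero (ζ : ℂ) : ∃ ω : ℂ, ‖ω‖ = 1 ∧ (ω * ζ).im = 0 := by
  refine ⟨exp (↑(-arg ζ) * I), norm_exp_ofReal_mul_I _, ?_⟩
  have hrot : exp (↑(-arg ζ) * I) * ζ = ‖ζ‖ :=
    calc exp (↑(-arg ζ) * I) * ζ = exp (↑(-arg ζ) * I) * (‖ζ‖ * exp (arg ζ * I)) := by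
          rw [norm_mul_exp_arg_mul_I]
      _ = ‖ζ‖ * exp (↑(-arg ζ) * I + arg ζ * I) := by rw [exp_add]; ring
      _ = ‖ζ‖ := by push_cast; rw [neg_mul, neg_add_cancel, exp_zero, mul_one]
  rw [hrot, ofReal_im]

theorem hermitian_reality_condition_general (lam : ℂ) (d : ℕ) (hd : 1 ≤ d)
    (ζ : ℂ) (hζ : ζ ≠ 0) :
    (∃ ω : ℂ, ‖ω‖ = 1 ∧ ∀ k : ℕ, k ≤ d → (ω * csign (lam ^ k) * ζ).im = 0) ↔
      lam.im = 0 := by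
  have rotate (ω : ℂ) (k : ℕ) : ω * csign (lam ^ k) * ζ = ω * ζ * csign (lam ^ k) := by ring
  constructor
  · rintro ⟨ω, hω, h⟩
    have hreal : (ω * ζ).im = 0 := by simpa [csign] using h 0 (Nat.zero_le d)
    have hne : ω * ζ ≠ 0 := mul_ne_zero (norm_ne_zero_iff.mp (hω ▸ one_ne_zero)) hζ
    have hsign := h 1 hd
    rw [rotate, pow_one] at hsign
    exact csign_im_eq_zero_iff.mp (im_eq_zero_of_im_mul_eq_zero hreal hne hsign)
  · intro hlam
    obtain ⟨ω, hω, hreal⟩ := exists_norm_eq_one_im_mul_eq_zero ζ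
    refine ⟨ω, hω, fun k _ => rotate ω k ▸ im_mul_eq_zero_of_im_eq_zero hreal ?_⟩
    exact csign_im_eq_zero_iff.mpr (im_pow_eq_zero_of_im_eq_zero hlam k)

theorem hermitian_reality_condition (lam : ℂ) (hlam : lam ≠ 0) (d : ℕ) (hd : 1 ≤ d)
    (ζ : ℂ) (hζ : ζ ≠ 0) :
    (∃ ω : ℂ, ‖ω‖ = 1 ∧ ∀ k : ℕ, k ≤ d → (ω * csign (lam ^ k) * ζ).im = 0) ↔
      lam.im = 0 :=
  hermitian_reality_condition_general lam d hd ζ hζ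
end

section
/- Let x, y ∈ ℂⁿ be unit vectors. There exists a complex skew-symmetric matrix R with ‖R‖ ≤ 1 (spectral norm) such that y*Rx = √(1 − |xᵀy|²). -/
open Matrix

/-- The spectral (operator 2-) norm of a complex matrix. -/
noncomputable def specNorm {n : ℕ} (A : Matrix (Fin n) (Fin n) ℂ) : ℝ :=
  ‖Matrix.toEuclideanCLM (𝕜 := ℂ) A‖

/-!
Write `ȳ` for the conjugate of `y`, so that `xᵀy = ⟪ȳ, x⟫`. The component
`u = x - (xᵀy) ȳ` of `x` orthogonal to `ȳ` has `‖u‖ = √(1 - |xᵀy|²)`. If `u = 0` take `R = 0`.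
Otherwise let `w = u / ‖u‖` and `R = y w̄ᵀ - w̄ yᵀ`, which is skew-symmetric with
`y* R x = w* x = ‖u‖`. Since `R v = ⟪w, v⟫ y - ⟪ȳ, v⟫ w̄` with `y ⊥ w̄`, we get
`‖R v‖² = |⟪w, v⟫|² + |⟪ȳ, v⟫|² ≤ ‖v‖²` by Bessel's inequality for the orthonormal pair `w, ȳ`.
-/

open WithLp
open scoped InnerProductSpace

section InnerProductSpace

variable {𝕜 E : Type*} [RCLike 𝕜] [NormedAddCommGroup E] [InnerProductSpace 𝕜 E]

theorem inner_sub_inner_smul_eq_zero {e : E} (he : ‖e‖ = 1) (x : E) :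
    ⟪e, x - ⟪e, x⟫_𝕜 • e⟫_𝕜 = 0 := by
  simp [inner_sub_right, inner_smul_right, inner_self_eq_norm_sq_to_K, he]

theorem norm_sub_inner_smul_eq_sqrt {e : E} (he : ‖e‖ = 1) (x : E) :
    ‖x - ⟪e, x⟫_𝕜 • e‖ = √(‖x‖ ^ 2 - ‖⟪e, x⟫_𝕜‖ ^ 2) := by
  set u := x - ⟪e, x⟫_𝕜 • e
  have hpyth := norm_add_sq_eq_norm_sq_add_norm_sq_of_inner_eq_zero (𝕜 := 𝕜) u (⟪e, x⟫_𝕜 • e)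
    (by rw [inner_smul_right, inner_eq_zero_symm.mp (inner_sub_inner_smul_eq_zero he x), mul_zero])
  rw [sub_add_cancel, norm_smul, he, mul_one] at hpyth
  rw [← Real.sqrt_sq (norm_nonneg u)]
  congr 1
  linear_combination -hpyth

theorem exists_norm_eq_one_inner_eq_zero_inner_eq_norm {e x : E} (he : ‖e‖ = 1)
    (hu : x - ⟪e, x⟫_𝕜 • e ≠ 0) :
    ∃ w : E, ‖w‖ = 1 ∧ ⟪e, w⟫_𝕜 = 0 ∧ ⟪w, x⟫_𝕜 = ‖x - ⟪e, x⟫_𝕜 • e‖ := by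
  set u := x - ⟪e, x⟫_𝕜 • e
  have heu : ⟪e, u⟫_𝕜 = 0 := inner_sub_inner_smul_eq_zero he x
  have hux : ⟪u, x⟫_𝕜 = ‖u‖ ^ 2 := by
    conv_lhs => rw [← sub_add_cancel x (⟪e, x⟫_𝕜 • e)]
    rw [inner_add_right, inner_smul_right, inner_eq_zero_symm.mp heu, mul_zero, add_zero,
      inner_self_eq_norm_sq_to_K]
  refine ⟨(‖u‖⁻¹ : 𝕜) • u, ?_, ?_, ?_⟩
  · rw [norm_smul, norm_inv, RCLike.norm_ofReal, abs_norm,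
      inv_mul_cancel₀ (norm_ne_zero_iff.mpr hu)]
  · rw [inner_smul_right, heu, mul_zero]
  · rw [inner_smul_left, hux, map_inv₀, RCLike.conj_ofReal]
    field_simp [norm_ne_zero_iff.mpr hu]

theorem norm_inner_sq_add_norm_inner_sq_le {u w : E} (hu : ‖u‖ = 1) (hw : ‖w‖ = 1)
    (huw : ⟪u, w⟫_𝕜 = 0) (v : E) :
    ‖⟪u, v⟫_𝕜‖ ^ 2 + ‖⟪w, v⟫_𝕜‖ ^ 2 ≤ ‖v‖ ^ 2 := by
  have hon : Orthonormal 𝕜 ![u, w] := by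
    refine ⟨fun i => by fin_cases i <;> simpa, fun i j hij => ?_⟩
    fin_cases i <;> fin_cases j <;> simp_all [inner_eq_zero_symm]
  simpa [Fin.sum_univ_two] using hon.sum_inner_products_le (s := Finset.univ) v

end InnerProductSpace

namespace EuclideanSpace

variable {𝕜 ι : Type*} [RCLike 𝕜] [Fintype ι]

theorem norm_toLp_star (v : ι → 𝕜) : ‖toLp 2 (star v)‖ = ‖toLp 2 v‖ := by
  simp [EuclideanSpace.norm_eq]

theorem inner_toLp_star_left (u : ι → 𝕜) (v : EuclideanSpace 𝕜 ι) :
    ⟪toLp 2 (star u), v⟫_𝕜 = ofLp v ⬝ᵥ u := by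
  simp [inner_eq_star_dotProduct]

theorem star_ofLp_dotProduct (u v : EuclideanSpace 𝕜 ι) :
    star (ofLp u) ⬝ᵥ ofLp v = ⟪u, v⟫_𝕜 := by
  rw [inner_eq_star_dotProduct, dotProduct_comm]

theorem inner_toLp_star_toLp_star (u v : ι → 𝕜) :
    ⟪toLp 2 (star u), toLp 2 (star v)⟫_𝕜 = ⟪toLp 2 v, toLp 2 u⟫_𝕜 := by
  simp [inner_toLp_toLp, dotProduct_comm]

end EuclideanSpace

namespace Matrix

variable {ι α : Type*} [CommRing α]

def wedge (a b : ι → α) : Matrix ι ι α := vecMulVec a b - vecMulVec b a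

theorem transpose_wedge (a b : ι → α) : (wedge a b)ᵀ = -wedge a b := by
  simp [wedge]

variable [Fintype ι]

theorem wedge_mulVec (a b v : ι → α) : wedge a b *ᵥ v = (b ⬝ᵥ v) • a - (a ⬝ᵥ v) • b := by
  simp [wedge, sub_mulVec, vecMulVec_mulVec]

theorem dotProduct_wedge_mulVec (u a b v : ι → α) :
    u ⬝ᵥ wedge a b *ᵥ v = (u ⬝ᵥ a) * (b ⬝ᵥ v) - (u ⬝ᵥ b) * (a ⬝ᵥ v) := by
  simp [wedge_mulVec, dotProduct_sub, dotProduct_smul, mul_comm]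

theorem norm_toEuclideanCLM_wedge_le {𝕜 : Type*} [RCLike 𝕜] [DecidableEq ι]
    {a b : EuclideanSpace 𝕜 ι} (ha : ‖a‖ = 1) (hb : ‖b‖ = 1) (hab : ⟪a, b⟫_𝕜 = 0) :
    ‖toEuclideanCLM (𝕜 := 𝕜) (wedge (ofLp a) (ofLp b))‖ ≤ 1 := by
  refine ContinuousLinearMap.opNorm_le_bound _ zero_le_one fun v => ?_
  have happly : toEuclideanCLM (𝕜 := 𝕜) (wedge (ofLp a) (ofLp b)) v =
      (ofLp b ⬝ᵥ ofLp v) • a - (ofLp a ⬝ᵥ ofLp v) • b :=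
    ofLp_injective 2 (by simp [wedge_mulVec])
  have hnorm : ‖toEuclideanCLM (𝕜 := 𝕜) (wedge (ofLp a) (ofLp b)) v‖ ^ 2 =
      ‖ofLp b ⬝ᵥ ofLp v‖ ^ 2 + ‖ofLp a ⬝ᵥ ofLp v‖ ^ 2 := by
    rw [happly, @norm_sub_sq 𝕜, inner_smul_left, inner_smul_right, hab]
    simp [norm_smul, ha, hb]
  have hbessel := norm_inner_sq_add_norm_inner_sq_le (𝕜 := 𝕜)
    (u := toLp 2 (star (ofLp b))) (w := toLp 2 (star (ofLp a)))
    (by rw [EuclideanSpace.norm_toLp_star, toLp_ofLp, hb])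
    (by rw [EuclideanSpace.norm_toLp_star, toLp_ofLp, ha])
    (by rw [EuclideanSpace.inner_toLp_star_toLp_star, toLp_ofLp, toLp_ofLp, hab]) v
  rw [EuclideanSpace.inner_toLp_star_left, EuclideanSpace.inner_toLp_star_left,
    dotProduct_comm (ofLp v), dotProduct_comm (ofLp v), ← hnorm] at hbessel
  rw [one_mul]
  exact (pow_le_pow_iff_left₀ (norm_nonneg _) (norm_nonneg _) two_ne_zero).mp hbessel

end Matrix

theorem skew_symmetric_attainability {n : ℕ} (x y : EuclideanSpace ℂ (Fin n))
    (hx : ‖x‖ = 1) (hy : ‖y‖ = 1) :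
    ∃ R : Matrix (Fin n) (Fin n) ℂ, Rᵀ = -R ∧ specNorm R ≤ 1 ∧
      star (y : Fin n → ℂ) ⬝ᵥ R.mulVec (x : Fin n → ℂ) =
        (Real.sqrt (1 - ‖(x : Fin n → ℂ) ⬝ᵥ (y : Fin n → ℂ)‖ ^ 2) : ℂ) := by
  set e : EuclideanSpace ℂ (Fin n) := toLp 2 (star (ofLp y))
  have he : ‖e‖ = 1 := by rw [EuclideanSpace.norm_toLp_star, toLp_ofLp, hy]
  have hdist : ‖x - ⟪e, x⟫_ℂ • e‖ = √(1 - ‖ofLp x ⬝ᵥ ofLp y‖ ^ 2) := by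
    rw [norm_sub_inner_smul_eq_sqrt he, hx, one_pow, EuclideanSpace.inner_toLp_star_left]
  by_cases hu : x - ⟪e, x⟫_ℂ • e = 0
  · refine ⟨0, by simp, by simp [specNorm], ?_⟩
    rw [← hdist, hu]
    simp
  obtain ⟨w, hw, hew, hwx⟩ := exists_norm_eq_one_inner_eq_zero_inner_eq_norm he hu
  have hyw : ⟪y, toLp 2 (star (ofLp w))⟫_ℂ = 0 := by
    rw [← toLp_ofLp 2 y, ← star_star (ofLp y), EuclideanSpace.inner_toLp_star_toLp_star,
      toLp_ofLp, inner_eq_zero_symm, hew]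
  have hyy : star (ofLp y) ⬝ᵥ ofLp y = 1 := by
    rw [EuclideanSpace.star_ofLp_dotProduct, inner_self_eq_norm_sq_to_K, hy]
    simp
  refine ⟨wedge (ofLp y) (star (ofLp w)), transpose_wedge _ _, ?_, ?_⟩
  · exact norm_toEuclideanCLM_wedge_le hy (by rw [EuclideanSpace.norm_toLp_star, toLp_ofLp, hw]) hyw
  · rw [← hdist, dotProduct_wedge_mulVec, hyy, one_mul,
      (EuclideanSpace.star_ofLp_dotProduct y (toLp 2 _)).trans hyw, zero_mul, sub_zero,
      EuclideanSpace.star_ofLp_dotProduct w x]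
    exact hwx
end

section
/- Let x, y ∈ ℂⁿ be unit vectors with x*y real. Then for every Hermitian matrix H with spectral norm ‖H‖ ≤ 1, |Im(y*Hx)| ≤ √(1 − |y*x|²). -/
open Matrix

/-!
Write `y = c x + z` with `c = ⟪x, y⟫` real and `z ⊥ x`. Since `H` is Hermitian, `⟪x, H x⟫` is
real, so the imaginary part of `⟪y, H x⟫` comes from `z` alone, and Cauchy–Schwarz bounds it by
`‖z‖ ‖H x‖ ≤ ‖z‖ = √(1 - c²)`.
-/

open scoped InnerProductSpace

section InnerProductSpace

variable {𝕜 E : Type*} [RCLike 𝕜] [NormedAddCommGroup E] [InnerProductSpace 𝕜 E]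

theorem norm_sub_inner_smul_sq {x : E} (hx : ‖x‖ = 1) (y : E) :
    ‖y - ⟪x, y⟫_𝕜 • x‖ ^ 2 = ‖y‖ ^ 2 - ‖⟪x, y⟫_𝕜‖ ^ 2 := by
  rw [@norm_sub_sq 𝕜, inner_smul_right, ← inner_conj_symm x y, RCLike.conj_mul, norm_smul,
    RCLike.norm_conj, hx]
  norm_cast
  ring

theorem LinearMap.IsSymmetric.im_inner_sub_ofReal_smul_apply {T : E →ₗ[𝕜] E}
    (hT : T.IsSymmetric) (x y : E) (c : ℝ) :
    RCLike.im ⟪y - (c : 𝕜) • x, T x⟫_𝕜 = RCLike.im ⟪y, T x⟫_𝕜 := by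
  simp [inner_sub_left, inner_smul_left, hT.im_inner_self_apply]

theorem LinearMap.IsSymmetric.abs_im_inner_apply_le {T : E →ₗ[𝕜] E} (hT : T.IsSymmetric)
    {x y : E} (hx : ‖x‖ = 1) (hreal : RCLike.im ⟪x, y⟫_𝕜 = 0) :
    |RCLike.im ⟪y, T x⟫_𝕜| ≤ √(‖y‖ ^ 2 - ‖⟪x, y⟫_𝕜‖ ^ 2) * ‖T x‖ := by
  have hc : ((RCLike.re ⟪x, y⟫_𝕜 : ℝ) : 𝕜) = ⟪x, y⟫_𝕜 := RCLike.conj_eq_iff_re.mp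
    (RCLike.conj_eq_iff_im.mpr hreal)
  calc |RCLike.im ⟪y, T x⟫_𝕜|
      = |RCLike.im ⟪y - ⟪x, y⟫_𝕜 • x, T x⟫_𝕜| := by
        rw [← hc, hT.im_inner_sub_ofReal_smul_apply]
    _ ≤ ‖⟪y - ⟪x, y⟫_𝕜 • x, T x⟫_𝕜‖ := RCLike.abs_im_le_norm _
    _ ≤ ‖y - ⟪x, y⟫_𝕜 • x‖ * ‖T x‖ := norm_inner_le_norm _ _
    _ = √(‖y‖ ^ 2 - ‖⟪x, y⟫_𝕜‖ ^ 2) * ‖T x‖ := by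
        rw [← norm_sub_inner_smul_sq hx, Real.sqrt_sq (norm_nonneg _)]

end InnerProductSpace

theorem star_dotProduct_eq_inner {n : ℕ} (x y : EuclideanSpace ℂ (Fin n)) :
    star (x : Fin n → ℂ) ⬝ᵥ (y : Fin n → ℂ) = ⟪x, y⟫_ℂ :=
  dotProduct_comm _ _

theorem hermitian_imaginary_part_bound {n : ℕ} (x y : EuclideanSpace ℂ (Fin n))
    (hx : ‖x‖ = 1) (hy : ‖y‖ = 1)
    (hreal : (star (x : Fin n → ℂ) ⬝ᵥ (y : Fin n → ℂ)).im = 0)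
    (H : Matrix (Fin n) (Fin n) ℂ) (hH : Hᴴ = H) (hnorm : specNorm H ≤ 1) :
    |(star (y : Fin n → ℂ) ⬝ᵥ H.mulVec (x : Fin n → ℂ)).im| ≤
      Real.sqrt (1 - ‖star (y : Fin n → ℂ) ⬝ᵥ (x : Fin n → ℂ)‖ ^ 2) := by
  set T := Matrix.toEuclideanCLM (𝕜 := ℂ) H
  have hT : (T : EuclideanSpace ℂ (Fin n) →ₗ[ℂ] _).IsSymmetric :=
    isSymmetric_toEuclideanLin_iff.mpr hH
  have hTx : ‖T x‖ ≤ 1 := (T.le_opNorm x).trans (by rw [hx, mul_one]; exact hnorm)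
  rw [star_dotProduct_eq_inner] at hreal
  rw [star_dotProduct_eq_inner y x, norm_inner_symm]
  calc |(star (y : Fin n → ℂ) ⬝ᵥ H *ᵥ (x : Fin n → ℂ)).im|
      = |RCLike.im ⟪y, T x⟫_ℂ| := by rw [← star_dotProduct_eq_inner]; rfl
    _ ≤ √(‖y‖ ^ 2 - ‖⟪x, y⟫_ℂ‖ ^ 2) * ‖T x‖ := hT.abs_im_inner_apply_le hx hreal
    _ ≤ √(‖y‖ ^ 2 - ‖⟪x, y⟫_ℂ‖ ^ 2) := mul_le_of_le_one_right (Real.sqrt_nonneg _) hTx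
    _ = √(1 - ‖⟪x, y⟫_ℂ‖ ^ 2) := by rw [hy, one_pow]
end
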